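/- arXiv:1207.6383 — 5 statements merged into one kernel-verified Lean document; each statement's English description precedes it below -/
import Mathlib

section
/- Let G be a finite abelian group and m, n positive integers. The subgroup H of G^{m×n} generated by all row moves r_i (r ∈ G, 1 ≤ i ≤ m) and column moves c_j (c ∈ G, 1 ≤ j ≤ n) has order |G|^{m+n-1}. -/
def rowMove {G : Type*} [Group G] (m n : ℕ) (r : G) (i : Fin m) : Fin m → Fin n → G :=
  fun i' _ => if i' = i then r else 1

def colMove {G : Type*} [Group G] (m n : ℕ) (c : G) (j : Fin n) : Fin m → Fin n → G :=
  fun _ j' => if j' = j then c else 1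

theorem abelian_moves_closure_card
    {G : Type*} [CommGroup G] [Fintype G] (m n : ℕ) (hm : 0 < m) (hn : 0 < n) :
    Nat.card (Subgroup.closure ({f | ∃ r i, f = rowMove m n r i} ∪
        {f | ∃ c j, f = colMove m n c j} : Set (Fin m → Fin n → G))) =
      Nat.card G ^ (m + n - 1) := by
  classical
  set S : Set (Fin m → Fin n → G) :=
    ({f | ∃ r i, f = rowMove m n r i} ∪ {f | ∃ c j, f = colMove m n c j}) with hS
  set φ : ((Fin m → G) × (Fin n → G)) →* (Fin m → Fin n → G) :=
    { toFun := fun p i j => p.1 i * p.2 j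
      map_one' := by funext i j; simp
      map_mul' := by intro a b; funext i j; simp [mul_mul_mul_comm] } with hφ
  have hrange : φ.range = Subgroup.closure S := by
    apply le_antisymm
    · rintro _ ⟨⟨r, c⟩, rfl⟩
      have heq : φ (r, c) =
          (∏ i, rowMove m n (r i) i) * (∏ j, colMove m n (c j) j) := by
        funext i j
        simp [hφ, rowMove, colMove, Finset.prod_apply]
      rw [heq]
      exact mul_mem
        (prod_mem fun i _ => Subgroup.subset_closure (Or.inl ⟨r i, i, rfl⟩))
        (prod_mem fun j _ => Subgroup.subset_closure (Or.inr ⟨c j, j, rfl⟩))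
    · rw [Subgroup.closure_le]
      rintro f (⟨r, i, rfl⟩ | ⟨c, j, rfl⟩)
      · exact ⟨(fun i' => if i' = i then r else 1, 1), by
          funext i' j; simp [hφ, rowMove]⟩
      · exact ⟨(1, fun j' => if j' = j then c else 1), by
          funext i j'; simp [hφ, colMove]⟩
  have hkermem : ∀ p : (Fin m → G) × (Fin n → G),
      p ∈ φ.ker ↔ ∀ i j, p.1 i * p.2 j = 1 := by
    intro p
    rw [MonoidHom.mem_ker]
    constructor
    · intro h i j; exact congrFun (congrFun h i) j
    · intro h; funext i j; exact h i j
  have hker : Nat.card φ.ker = Nat.card G := by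
    refine Nat.card_congr ⟨fun k => k.1.1 ⟨0, hm⟩, fun g =>
      ⟨(fun _ => g, fun _ => g⁻¹), (hkermem _).mpr (fun i j => mul_inv_cancel g)⟩,
      ?_, fun g => rfl⟩
    rintro ⟨⟨r, c⟩, hk⟩
    have hk' := (hkermem _).mp hk
    ext x
    · show (fun _ => r ⟨0, hm⟩) x = r x
      have h1 := hk' x ⟨0, hn⟩
      have h2 := hk' ⟨0, hm⟩ ⟨0, hn⟩
      simp only at h1 h2
      exact (mul_left_cancel (a := c ⟨0, hn⟩) (by rw [mul_comm, h1, mul_comm, h2])).symm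
    · show (fun _ => (r ⟨0, hm⟩)⁻¹) x = c x
      have h2 := hk' ⟨0, hm⟩ x
      exact (eq_inv_of_mul_eq_one_left (by rw [mul_comm]; exact h2)).symm
  have hcard : Nat.card ((Fin m → G) × (Fin n → G)) =
      Nat.card (((Fin m → G) × (Fin n → G)) ⧸ φ.ker) * Nat.card φ.ker :=
    Subgroup.card_eq_card_quotient_mul_card_subgroup φ.ker
  have hquot : Nat.card (((Fin m → G) × (Fin n → G)) ⧸ φ.ker) = Nat.card φ.range :=
    Nat.card_congr (QuotientGroup.quotientKerEquivRange φ).toEquiv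
  have hdom : Nat.card ((Fin m → G) × (Fin n → G)) = Nat.card G ^ (m + n) := by
    simp [Nat.card_prod, Nat.card_fun, pow_add]
  rw [hdom, hquot, hker] at hcard
  have hmn : m + n - 1 + 1 = m + n := by omega
  have : Nat.card φ.range * Nat.card G = Nat.card G ^ (m + n - 1) * Nat.card G := by
    rw [← hcard, ← pow_succ, hmn]
  have hfin : Nat.card φ.range = Nat.card G ^ (m + n - 1) :=
    Nat.eq_of_mul_eq_mul_right Nat.card_pos this
  rw [← hrange]
  exact hfin
end

section
/- Let G be a finite non-abelian simple group and m, n positive integers. Then the subgroup of G^{m×n} generated by all row moves r_i (r ∈ G, 1 ≤ i ≤ m) and all column moves c_j (c ∈ G, 1 ≤ j ≤ n) is all of G^{m×n}. -/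
theorem simple_nonabelian_moves_generate_everything
    {G : Type*} [Group G] [Finite G] [IsSimpleGroup G]
    (hnab : ¬ ∀ a b : G, a * b = b * a) (m n : ℕ) (hm : 0 < m) (hn : 0 < n) :
    Subgroup.closure ({f | ∃ r i, f = rowMove m n r i} ∪
        {f | ∃ c j, f = colMove m n c j} : Set (Fin m → Fin n → G)) = ⊤ := by
  set H := Subgroup.closure ({f | ∃ r i, f = rowMove m n r i} ∪
      {f | ∃ c j, f = colMove m n c j} : Set (Fin m → Fin n → G)) with hH
  have key : ∀ (i : Fin m) (j : Fin n) (g : G),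
      Pi.mulSingle i (Pi.mulSingle j g) ∈ H := by
    intro i j
    set φ : G →* (Fin m → Fin n → G) :=
      (MonoidHom.mulSingle (fun _ : Fin m => Fin n → G) i).comp
        (MonoidHom.mulSingle (fun _ : Fin n => G) j) with hφ
    have hrow : ∀ r : G, rowMove m n r i ∈ H :=
      fun r => Subgroup.subset_closure (Or.inl ⟨r, i, rfl⟩)
    have hcol : ∀ c : G, colMove m n c j ∈ H :=
      fun c => Subgroup.subset_closure (Or.inr ⟨c, j, rfl⟩)
    suffices h : Subgroup.comap φ H = ⊤ by
      intro g
      exact (Subgroup.eq_top_iff' _).mp h g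
    have hconj : ∀ (r g : G), φ (r * g * r⁻¹) =
        rowMove m n r i * φ g * (rowMove m n r i)⁻¹ := by
      intro r g
      funext i' j'
      simp only [hφ, MonoidHom.comp_apply, MonoidHom.mulSingle_apply, Pi.mul_apply,
        Pi.inv_apply, rowMove, Pi.mulSingle_apply]
      by_cases h1 : i' = i <;> by_cases h2 : j' = j <;>
        simp [h1, h2, Pi.mulSingle_apply]
    have hnorm : (Subgroup.comap φ H).Normal := by
      constructor
      intro g hg r
      show φ (r * g * r⁻¹) ∈ H
      rw [hconj]
      exact mul_mem (mul_mem (hrow r) hg) (inv_mem (hrow r))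
    rcases hnorm.eq_bot_or_eq_top with hbot | htop
    · exfalso
      push_neg at hnab
      obtain ⟨a, b, hab⟩ := hnab
      have hcomm : φ (a * b * a⁻¹ * b⁻¹) =
          rowMove m n a i * colMove m n b j *
            (rowMove m n a i)⁻¹ * (colMove m n b j)⁻¹ := by
        funext i' j'
        simp only [hφ, MonoidHom.comp_apply, MonoidHom.mulSingle_apply, Pi.mul_apply,
          Pi.inv_apply, rowMove, colMove, Pi.mulSingle_apply]
        by_cases h1 : i' = i <;> by_cases h2 : j' = j <;>
          simp [h1, h2, Pi.mulSingle_apply]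
      have hmem : a * b * a⁻¹ * b⁻¹ ∈ Subgroup.comap φ H := by
        show φ _ ∈ H
        rw [hcomm]
        exact mul_mem (mul_mem (mul_mem (hrow a) (hcol b)) (inv_mem (hrow a)))
          (inv_mem (hcol b))
      rw [hbot, Subgroup.mem_bot] at hmem
      apply hab
      have h2 : a * b * (b * a)⁻¹ = 1 := by
        rw [mul_inv_rev, ← mul_assoc]; exact hmem
      exact mul_inv_eq_one.mp h2
    · exact htop
  rw [eq_top_iff]
  intro f _
  refine Subgroup.pi_mem_of_mulSingle_mem f fun i => ?_
  have : f i ∈ Subgroup.comap (MonoidHom.mulSingle (fun _ : Fin m => Fin n → G) i) H :=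
    Subgroup.pi_mem_of_mulSingle_mem (f i) fun j => key i j (f i j)
  exact this
end

section
/- Let G be a group and suppose subsets R, C ⊆ G generate G (i.e., ⟨R⟩ = ⟨C⟩ = G). If G is a finite non-abelian simple group, then the subgroup of G^{m×n} generated by the row moves {r_i : r ∈ R, 1 ≤ i ≤ m} and column moves {c_j : c ∈ C, 1 ≤ j ≤ n} equals G^{m×n}. -/
namespace MovesAux

variable {G : Type*} [Group G] {m n : ℕ}

/-- The elementary move: `g` at position `(i,j)`, identity elsewhere. -/
def eMove (m n : ℕ) (g : G) (i : Fin m) (j : Fin n) : Fin m → Fin n → G :=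
  fun i' j' => if i' = i ∧ j' = j then g else 1

lemma eMove_one (i : Fin m) (j : Fin n) : eMove m n (1 : G) i j = 1 := by
  funext i' j'
  simp only [eMove]
  split_ifs <;> rfl

lemma eMove_mul (g h : G) (i : Fin m) (j : Fin n) :
    eMove m n g i j * eMove m n h i j = eMove m n (g * h) i j := by
  funext i' j'
  simp only [eMove, Pi.mul_apply]
  split_ifs <;> simp

lemma eMove_inv (g : G) (i : Fin m) (j : Fin n) :
    (eMove m n g i j)⁻¹ = eMove m n g⁻¹ i j := by
  funext i' j'
  simp only [eMove, Pi.inv_apply]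
  split_ifs <;> simp

lemma rowMove_inv (r : G) (i : Fin m) :
    (rowMove m n r i)⁻¹ = rowMove m n r⁻¹ i := by
  funext i' j'
  simp only [rowMove, Pi.inv_apply]
  split_ifs <;> simp

lemma row_conj (r g : G) (i : Fin m) (j : Fin n) :
    rowMove m n r i * eMove m n g i j * rowMove m n r⁻¹ i = eMove m n (r * g * r⁻¹) i j := by
  funext i' j'
  simp only [rowMove, eMove, Pi.mul_apply]
  by_cases h1 : i' = i <;> by_cases h2 : j' = j <;> simp [h1, h2]

lemma commutator_eq (r c : G) (i : Fin m) (j : Fin n) :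
    rowMove m n r i * colMove m n c j * rowMove m n r⁻¹ i * colMove m n c⁻¹ j
      = eMove m n (r * c * r⁻¹ * c⁻¹) i j := by
  funext i' j'
  simp only [rowMove, colMove, eMove, Pi.mul_apply]
  by_cases h1 : i' = i <;> by_cases h2 : j' = j <;> simp [h1, h2]

lemma colMove_inv (c : G) (j : Fin n) :
    (colMove m n c j : Fin m → Fin n → G)⁻¹ = colMove m n c⁻¹ j := by
  funext i' j'
  simp only [colMove, Pi.inv_apply]
  split_ifs <;> simp

lemma eMove_eq_mulSingle [DecidableEq (Fin m)] [DecidableEq (Fin n)]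
    (g : G) (i : Fin m) (j : Fin n) :
    eMove m n g i j = Pi.mulSingle i (Pi.mulSingle j g) := by
  funext i' j'
  by_cases h1 : i' = i <;> by_cases h2 : j' = j <;>
    simp [eMove, Pi.mulSingle_apply, h1, h2]

end MovesAux

theorem simple_nonabelian_restricted_moves_generate
    {G : Type*} [Group G] [Finite G] [IsSimpleGroup G]
    (hnab : ¬ ∀ a b : G, a * b = b * a)
    (R C : Set G) (hR : Subgroup.closure R = ⊤) (hC : Subgroup.closure C = ⊤)
    (m n : ℕ) (hm : 0 < m) (hn : 0 < n) :
    Subgroup.closure ({f | ∃ r ∈ R, ∃ i, f = rowMove m n r i} ∪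
        {f | ∃ c ∈ C, ∃ j, f = colMove m n c j} : Set (Fin m → Fin n → G)) = ⊤ := by
  classical
  set H : Subgroup (Fin m → Fin n → G) :=
    Subgroup.closure ({f | ∃ r ∈ R, ∃ i, f = rowMove m n r i} ∪
        {f | ∃ c ∈ C, ∃ j, f = colMove m n c j}) with hH
  have hrowH : ∀ r ∈ R, ∀ i : Fin m, rowMove m n r i ∈ H := fun r hr i =>
    Subgroup.subset_closure (Or.inl ⟨r, hr, i, rfl⟩)
  have hcolH : ∀ c ∈ C, ∀ j : Fin n, colMove m n c j ∈ H := fun c hc j =>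
    Subgroup.subset_closure (Or.inr ⟨c, hc, j, rfl⟩)
  -- a noncommuting pair of generators
  obtain ⟨r₀, hr₀, c₀, hc₀, hrc⟩ : ∃ r ∈ R, ∃ c ∈ C, r * c ≠ c * r := by
    by_contra h
    push_neg at h
    apply hnab
    -- every element of R is central
    have hcen : Subgroup.centralizer R = ⊤ := by
      rw [← top_le_iff, ← hC, Subgroup.closure_le]
      intro c hc
      rw [SetLike.mem_coe, Subgroup.mem_centralizer_iff]
      intro r hr
      exact h r hr c hc
    have hcenter : Subgroup.center G = ⊤ := by
      rw [← top_le_iff, ← hR, Subgroup.closure_le]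
      intro r hr
      rw [SetLike.mem_coe, Subgroup.mem_center_iff]
      intro g
      have : g ∈ Subgroup.centralizer R := hcen ▸ Subgroup.mem_top g
      exact (Subgroup.mem_centralizer_iff.mp this r hr).symm
    intro a b
    have ha : a ∈ Subgroup.center G := hcenter ▸ Subgroup.mem_top a
    exact (Subgroup.mem_center_iff.mp ha b).symm
  -- the key claim: all elementary moves are in H
  have key : ∀ (i : Fin m) (j : Fin n) (g : G), MovesAux.eMove m n g i j ∈ H := by
    intro i j
    set K : Subgroup G :=
      { carrier := {g | MovesAux.eMove m n g i j ∈ H}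
        one_mem' := by
          show MovesAux.eMove m n (1 : G) i j ∈ H
          rw [MovesAux.eMove_one]
          exact H.one_mem
        mul_mem' := by
          intro a b ha hb
          have := H.mul_mem ha hb
          rwa [MovesAux.eMove_mul] at this
        inv_mem' := by
          intro a ha
          have := H.inv_mem ha
          rwa [MovesAux.eMove_inv] at this } with hKdef
    have hKmem : ∀ g : G, g ∈ K ↔ MovesAux.eMove m n g i j ∈ H := fun g => Iff.rfl
    -- conjugation by any r with rowMove r i ∈ H preserves K
    have conj2 : ∀ r : G, rowMove m n r i ∈ H → ∀ g ∈ K, r * g * r⁻¹ ∈ K := by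
      intro r hrH g hg
      rw [hKmem] at hg ⊢
      have hinv : rowMove m n r⁻¹ i ∈ H := by
        rw [← MovesAux.rowMove_inv]
        exact H.inv_mem hrH
      have := H.mul_mem (H.mul_mem hrH hg) hinv
      rwa [MovesAux.row_conj] at this
    have hrowinvH : ∀ r ∈ R, rowMove m n r⁻¹ i ∈ H := by
      intro r hr
      rw [← MovesAux.rowMove_inv]
      exact H.inv_mem (hrowH r hr i)
    -- K is normal
    have hnorm : K.Normal := by
      rw [← Subgroup.normalizer_eq_top_iff, ← top_le_iff, ← hR, Subgroup.closure_le]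
      intro r hr
      rw [SetLike.mem_coe, Subgroup.mem_normalizer_iff]
      intro g
      constructor
      · exact conj2 r (hrowH r hr i) g
      · intro hg
        have := conj2 r⁻¹ (hrowinvH r hr) _ hg
        have heq : r⁻¹ * (r * g * r⁻¹) * r⁻¹⁻¹ = g := by group
        rwa [heq] at this
    -- K is nontrivial: it contains the nontrivial commutator [r₀, c₀]
    have hcomm : r₀ * c₀ * r₀⁻¹ * c₀⁻¹ ∈ K := by
      rw [hKmem, ← MovesAux.commutator_eq]
      exact H.mul_mem (H.mul_mem (H.mul_mem (hrowH r₀ hr₀ i) (hcolH c₀ hc₀ j))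
        (hrowinvH r₀ hr₀)) (by rw [← MovesAux.colMove_inv]; exact H.inv_mem (hcolH c₀ hc₀ j))
    have hne : r₀ * c₀ * r₀⁻¹ * c₀⁻¹ ≠ 1 := by
      intro h
      apply hrc
      have := mul_eq_one_iff_eq_inv.mp h
      calc r₀ * c₀ = (r₀ * c₀ * r₀⁻¹ * c₀⁻¹) * (c₀ * r₀) := by group
        _ = 1 * (c₀ * r₀) := by rw [h]
        _ = c₀ * r₀ := one_mul _
    have hKtop : K = ⊤ := by
      rcases hnorm.eq_bot_or_eq_top with hbot | htop
      · exfalso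
        apply hne
        rw [hbot] at hcomm
        exact Subgroup.mem_bot.mp hcomm
      · exact htop
    intro g
    have : g ∈ K := hKtop ▸ Subgroup.mem_top g
    rwa [hKmem] at this
  -- conclude: every element of the product group is in H
  rw [eq_top_iff]
  intro f _
  apply Subgroup.pi_mem_of_mulSingle_mem (f := fun _ : Fin m => Fin n → G)
  intro i
  have : f i ∈ H.comap (MonoidHom.mulSingle (fun _ : Fin m => Fin n → G) i) := by
    apply Subgroup.pi_mem_of_mulSingle_mem (f := fun _ : Fin n => G)
    intro j
    rw [Subgroup.mem_comap]
    have := key i j (f i j)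
    rwa [MovesAux.eMove_eq_mulSingle] at this
  exact this
end

section
/- Let m, n be positive integers and let H ≤ S_4^{m×n} be the subgroup generated by the moves up_i, down_i (1 ≤ i ≤ m) and left_j, right_j (1 ≤ j ≤ n), where up_i multiplies every entry of row i on the right by u = (1 4 2 3), down_i by d = (1 3 2 4), left_j multiplies every entry of column j by l = (1 3 4 2), and right_j by r = (1 2 4 3). Then every element (g_{ij}) of H satisfies sgn(g_{ij}) = sgn(g_{1j}) · sgn(g_{i1}) · sgn(g_{11}) for all i, j. -/
def cubeU : Equiv.Perm (Fin 4) := c[(0 : Fin 4), 3, 1, 2]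
def cubeD : Equiv.Perm (Fin 4) := c[(0 : Fin 4), 2, 1, 3]
def cubeL : Equiv.Perm (Fin 4) := c[(0 : Fin 4), 2, 3, 1]
def cubeR : Equiv.Perm (Fin 4) := c[(0 : Fin 4), 1, 3, 2]

def cubeMoves (m n : ℕ) : Set (Fin m → Fin n → Equiv.Perm (Fin 4)) :=
  {f | ∃ i, f = rowMove m n cubeU i ∨ f = rowMove m n cubeD i} ∪
  {f | ∃ j, f = colMove m n cubeL j ∨ f = colMove m n cubeR j}


lemma ite_sign_helper (s : ℤˣ) (a b : Prop) [Decidable a] [Decidable b] :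
    (if b then s else 1) = (if a then s else 1) * (if b then s else 1) * (if a then s else 1) := by
  split_ifs <;> simp [mul_comm, mul_assoc, Int.units_mul_self]

lemma ite_sign_helper2 (s : ℤˣ) (a b : Prop) [Decidable a] [Decidable b] :
    (if b then s else 1) = (if b then s else 1) * (if a then s else 1) * (if a then s else 1) := by
  split_ifs <;> simp [mul_comm, mul_assoc, Int.units_mul_self]

theorem cube_puzzle_sign_condition (m n : ℕ) (hm : 0 < m) (hn : 0 < n)
    (g : Fin m → Fin n → Equiv.Perm (Fin 4))
    (hg : g ∈ Subgroup.closure (cubeMoves m n)) :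
    ∀ i j, Equiv.Perm.sign (g i j) =
      Equiv.Perm.sign (g ⟨0, hm⟩ j) * Equiv.Perm.sign (g i ⟨0, hn⟩) *
        Equiv.Perm.sign (g ⟨0, hm⟩ ⟨0, hn⟩) := by
  induction hg using Subgroup.closure_induction with
  | mem f hf =>
    intro i j
    rcases hf with ⟨i₀, h | h⟩ | ⟨j₀, h | h⟩ <;> subst h <;>
      simp only [rowMove, colMove, apply_ite Equiv.Perm.sign, map_one]
    · exact ite_sign_helper _ _ _
    · exact ite_sign_helper _ _ _
    · exact ite_sign_helper2 _ _ _
    · exact ite_sign_helper2 _ _ _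
  | one => intro i j; simp
  | mul a b _ _ ha hb =>
    intro i j
    simp only [Pi.mul_apply, map_mul, ha i j, hb i j]
    simp [mul_comm, mul_assoc, mul_left_comm]
  | inv a _ ha =>
    intro i j
    simp only [Pi.inv_apply, map_inv, ha i j, Int.units_inv_eq_self]
end

section
/- With moves as in the picture cube puzzle (u = (1 4 2 3), d = (1 3 2 4) acting on rows, l = (1 3 4 2), r = (1 2 4 3) acting on columns of S_4^{m×n}), the subgroup H generated by all row and column moves contains A_4^{m×n}, the subgroup of matrices all of whose entries are even permutations. -/
/-!
The commutator of a row move `x` in row `i` and a column move `y` in column `j` is the matrix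
with `⁅x, y⁆` at `(i, j)` and `1` elsewhere, since the two moves overlap only in that entry.
On the labels `0, …, 3`, the commutators `⁅u, l⁆ = (0 2 1)` and `⁅u, r⁆ = (0 1 3)` are two
3-cycles generating `A₄`, so every single-entry matrix with an even entry lies in `H`, and these
generate `A₄^{m×n}`.
-/

open scoped commutatorElement

section SingleEntry

variable {G : Type*} [Group G] {ι κ : Type*} [DecidableEq ι] [DecidableEq κ]

variable (G) in
def singleEntryHom (i : ι) (j : κ) : G →* (ι → κ → G) :=
  (MonoidHom.mulSingle (fun _ => κ → G) i).comp (MonoidHom.mulSingle (fun _ => G) j)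

theorem mem_of_singleEntryHom_mem [Finite ι] [Finite κ] {H : Subgroup (ι → κ → G)}
    (g : ι → κ → G) (h : ∀ i j, singleEntryHom G i j (g i j) ∈ H) : g ∈ H :=
  Subgroup.pi_mem_of_mulSingle_mem g fun i =>
    Subgroup.pi_mem_of_mulSingle_mem (H := H.comap (MonoidHom.mulSingle (fun _ => κ → G) i))
      (g i) (h i)

end SingleEntry

theorem commutatorElement_rowMove_colMove {G : Type*} [Group G] {m n : ℕ} (x y : G)
    (i : Fin m) (j : Fin n) :
    ⁅rowMove m n x i, colMove m n y j⁆ = singleEntryHom G i j ⁅x, y⁆ := by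
  funext i' j'
  by_cases hi : i' = i <;> by_cases hj : j' = j <;>
    simp [rowMove, colMove, singleEntryHom, commutatorElement_def, hi, hj]

theorem singleEntryHom_commutator_mem_closure_cubeMoves {m n : ℕ} (i : Fin m) (j : Fin n)
    {x y : Equiv.Perm (Fin 4)} (hx : x = cubeU ∨ x = cubeD) (hy : y = cubeL ∨ y = cubeR) :
    singleEntryHom _ i j ⁅x, y⁆ ∈ Subgroup.closure (cubeMoves m n) := by
  have hrow : rowMove m n x i ∈ Subgroup.closure (cubeMoves m n) :=
    Subgroup.subset_closure (Or.inl ⟨i, by rcases hx with rfl | rfl <;> simp⟩)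
  have hcol : colMove m n y j ∈ Subgroup.closure (cubeMoves m n) :=
    Subgroup.subset_closure (Or.inr ⟨j, by rcases hy with rfl | rfl <;> simp⟩)
  rw [← commutatorElement_rowMove_colMove, commutatorElement_def]
  exact mul_mem (mul_mem (mul_mem hrow hcol) (inv_mem hrow)) (inv_mem hcol)

set_option maxRecDepth 20000 in
theorem exists_eq_commutator_word_of_mem_alternatingGroup {σ : Equiv.Perm (Fin 4)}
    (hσ : σ ∈ alternatingGroup (Fin 4)) :
    ∃ i j k : Fin 3,
      σ = ⁅cubeU, cubeL⁆ ^ (i : ℕ) * ⁅cubeU, cubeR⁆ ^ (j : ℕ) * ⁅cubeU, cubeL⁆ ^ (k : ℕ) := by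
  revert σ
  simp only [Equiv.Perm.mem_alternatingGroup]
  decide

theorem alternatingGroup_le_closure_cube_commutators :
    alternatingGroup (Fin 4) ≤ Subgroup.closure {⁅cubeU, cubeL⁆, ⁅cubeU, cubeR⁆} := by
  intro σ hσ
  obtain ⟨i, j, k, rfl⟩ := exists_eq_commutator_word_of_mem_alternatingGroup hσ
  have ha : ⁅cubeU, cubeL⁆ ∈ Subgroup.closure {⁅cubeU, cubeL⁆, ⁅cubeU, cubeR⁆} :=
    Subgroup.subset_closure (Set.mem_insert _ _)
  have hb : ⁅cubeU, cubeR⁆ ∈ Subgroup.closure {⁅cubeU, cubeL⁆, ⁅cubeU, cubeR⁆} :=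
    Subgroup.subset_closure (Set.mem_insert_of_mem _ rfl)
  exact mul_mem (mul_mem (pow_mem ha _) (pow_mem hb _)) (pow_mem ha _)

theorem cube_puzzle_contains_A4_matrices_general (m n : ℕ)
    (g : Fin m → Fin n → Equiv.Perm (Fin 4))
    (hg : ∀ i j, g i j ∈ alternatingGroup (Fin 4)) :
    g ∈ Subgroup.closure (cubeMoves m n) := by
  refine mem_of_singleEntryHom_mem g fun i j => ?_
  have hcomm : Subgroup.closure {⁅cubeU, cubeL⁆, ⁅cubeU, cubeR⁆} ≤
      (Subgroup.closure (cubeMoves m n)).comap (singleEntryHom _ i j) := by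
    rw [Subgroup.closure_le]
    rintro _ (rfl | rfl)
    · exact singleEntryHom_commutator_mem_closure_cubeMoves i j (.inl rfl) (.inl rfl)
    · exact singleEntryHom_commutator_mem_closure_cubeMoves i j (.inl rfl) (.inr rfl)
  exact hcomm (alternatingGroup_le_closure_cube_commutators (hg i j))

theorem cube_puzzle_contains_A4_matrices (m n : ℕ) (hm : 0 < m) (hn : 0 < n)
    (g : Fin m → Fin n → Equiv.Perm (Fin 4))
    (hg : ∀ i j, g i j ∈ alternatingGroup (Fin 4)) :
    g ∈ Subgroup.closure (cubeMoves m n) :=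
  cube_puzzle_contains_A4_matrices_general m n g hg
end
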